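/- Let H be a locally compact Hausdorff space and K ∈ Sh(H × H) a sheaf kernel with associated integral transform Φ_K(F) = p₂_!(K ⊗ p₁^*F). Then the trace of Φ_K (computed with respect to the self-duality of Sh(H)) is naturally isomorphic to the compactly supported sections of the restriction of K to the diagonal: Tr(Φ_K) ≅ Γ_c(H, Δ^*K). In particular Tr(id_{Sh(H)}) ≅ Γ_c(H, 1_H). -/

import Mathlib

/-!
The integral transform `Φ_K` has kernel `K`: pushing the coevaluation `η` through `Φ_K ⊗ X`
gives back `K`, by interchanging `K` with `η` and applying the zigzag identity. Since `η` is
symmetric, the braiding in the trace can be moved past `Φ_K` and absorbed into `η`, so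
`Tr(Φ_K) = η ≫ (Φ_K ▷ X) ≫ ε = K ≫ ε`.
-/

open CategoryTheory MonoidalCategory

namespace CategoryTheory.MonoidalCategory

variable {M : Type*} [Category M] [MonoidalCategory M]

def kernelTransform {X Y : M} (ε : X ⊗ X ⟶ 𝟙_ M) (K : 𝟙_ M ⟶ Y ⊗ X) : X ⟶ Y :=
  (λ_ X).inv ≫ (K ▷ X) ≫ (α_ Y X X).hom ≫ (Y ◁ ε) ≫ (ρ_ Y).hom

theorem coev_comp_whiskerRight_kernelTransform {X Y : M} {η : 𝟙_ M ⟶ X ⊗ X}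
    {ε : X ⊗ X ⟶ 𝟙_ M}
    (zigzag : (ρ_ X).inv ≫ (X ◁ η) ≫ (α_ X X X).inv ≫ (ε ▷ X) ≫ (λ_ X).hom = 𝟙 X)
    (K : 𝟙_ M ⟶ Y ⊗ X) :
    η ≫ (kernelTransform ε K ▷ X) = K := by
  calc η ≫ (kernelTransform ε K ▷ X)
      = (λ_ (𝟙_ M)).inv ≫ (𝟙_ M ◁ η) ≫ (K ▷ (X ⊗ X)) ≫ (α_ Y X (X ⊗ X)).hom ≫
          (Y ◁ (α_ X X X).inv) ≫ (Y ◁ (ε ▷ X)) ≫ (Y ◁ (λ_ X).hom) := by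
        simp only [kernelTransform]; monoidal
    _ = K ≫ (ρ_ (Y ⊗ X)).inv ≫ ((Y ⊗ X) ◁ η) ≫ (α_ Y X (X ⊗ X)).hom ≫
          (Y ◁ (α_ X X X).inv) ≫ (Y ◁ (ε ▷ X)) ≫ (Y ◁ (λ_ X).hom) := by
        rw [whisker_exchange_assoc, unitors_inv_equal, rightUnitor_inv_naturality_assoc]
    _ = K ≫ (Y ◁ ((ρ_ X).inv ≫ (X ◁ η) ≫ (α_ X X X).inv ≫ (ε ▷ X) ≫ (λ_ X).hom)) := by
        monoidal
    _ = K := by rw [zigzag, whiskerLeft_id, Category.comp_id]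

theorem coev_comp_whiskerLeft_braiding_comp {X Y Z : M} [BraidedCategory M]
    {η : 𝟙_ M ⟶ X ⊗ X} (hη : η ≫ (β_ X X).hom = η) (f : X ⟶ Y) (g : Y ⊗ X ⟶ Z) :
    η ≫ (X ◁ f) ≫ (β_ X Y).hom ≫ g = η ≫ (f ▷ X) ≫ g := by
  rw [BraidedCategory.braiding_naturality_right_assoc, ← Category.assoc, hη]

end CategoryTheory.MonoidalCategory

theorem stmt12_general {M : Type*} [Category M] [MonoidalCategory M] [SymmetricCategory M]
    (X : M)
    (η : 𝟙_ M ⟶ X ⊗ X) (ε : X ⊗ X ⟶ 𝟙_ M)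
    (tri1 : (ρ_ X).inv ≫ (X ◁ η) ≫ (α_ X X X).inv ≫ (ε ▷ X) ≫ (λ_ X).hom = 𝟙 X)
    (hηsymm : η ≫ (β_ X X).hom = η)
    (K : 𝟙_ M ⟶ X ⊗ X)
    (ΦK : X ⟶ X)
    (hΦ : ΦK = (λ_ X).inv ≫ (K ▷ X) ≫ (α_ X X X).hom ≫ (X ◁ ε) ≫ (ρ_ X).hom) :
    -- Tr(Φ_K) = Γ_c(H, Δ^*K) = a_! Δ^* K
    η ≫ (X ◁ ΦK) ≫ (β_ X X).hom ≫ ε = K ≫ ε ∧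
    -- in particular Tr(1_{Sh(H)}) = Γ_c(H, 1_H) = a_! Δ^* Δ_! a^* = ε ∘ η
    η ≫ (X ◁ (𝟙 X)) ≫ (β_ X X).hom ≫ ε = η ≫ ε := by
  have hΦ' : ΦK = kernelTransform ε K := hΦ
  refine ⟨?_, ?_⟩
  · rw [coev_comp_whiskerLeft_braiding_comp hηsymm, hΦ', ← Category.assoc,
      coev_comp_whiskerRight_kernelTransform tri1]
  · rw [coev_comp_whiskerLeft_braiding_comp hηsymm, id_whiskerRight, Category.id_comp]

theorem stmt12 {M : Type*} [Category M] [MonoidalCategory M] [SymmetricCategory M]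
    (X : M)
    (η : 𝟙_ M ⟶ X ⊗ X) (ε : X ⊗ X ⟶ 𝟙_ M)
    (tri1 : (ρ_ X).inv ≫ (X ◁ η) ≫ (α_ X X X).inv ≫ (ε ▷ X) ≫ (λ_ X).hom = 𝟙 X)
    (tri2 : (λ_ X).inv ≫ (η ▷ X) ≫ (α_ X X X).hom ≫ (X ◁ ε) ≫ (ρ_ X).hom = 𝟙 X)
    (hεsymm : (β_ X X).hom ≫ ε = ε) (hηsymm : η ≫ (β_ X X).hom = η)
    (K : 𝟙_ M ⟶ X ⊗ X)
    (ΦK : X ⟶ X)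
    (hΦ : ΦK = (λ_ X).inv ≫ (K ▷ X) ≫ (α_ X X X).hom ≫ (X ◁ ε) ≫ (ρ_ X).hom) :
    -- Tr(Φ_K) = Γ_c(H, Δ^*K) = a_! Δ^* K
    η ≫ (X ◁ ΦK) ≫ (β_ X X).hom ≫ ε = K ≫ ε ∧
    -- in particular Tr(1_{Sh(H)}) = Γ_c(H, 1_H) = a_! Δ^* Δ_! a^* = ε ∘ η
    η ≫ (X ◁ (𝟙 X)) ≫ (β_ X X).hom ≫ ε = η ≫ ε :=
  stmt12_general X η ε tri1 hηsymm K ΦK hΦ
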